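/- For n > 2 and any complex n×n matrix Ψ, one has (1/n!) Σ_{σ∈S_n} Tr(Ψ† U(σ)) Tr(U(σ)† Ψ) = Tr(PΨ†PΨ) + (1/(n-1)) Tr((I-P)Ψ†(I-P)Ψ), where P is the orthogonal projection onto the span of the all-ones vector in ℂⁿ and U(σ) is the permutation matrix of σ. -/

import Mathlib

open Matrix

/-- The permutation matrix `U(σ)` of `σ ∈ S_n`. -/
def U {n : ℕ} (σ : Equiv.Perm (Fin n)) : Matrix (Fin n) (Fin n) ℂ :=
  Matrix.of fun k j => if k = σ j then 1 else 0

/-- `P = (1/n) J`, the orthogonal projection onto the span of the all-ones vector in `ℂⁿ`. -/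
noncomputable def P (n : ℕ) : Matrix (Fin n) (Fin n) ℂ :=
  Matrix.of fun _ _ => 1 / (n : ℂ)

namespace PermSecondMoment

open Finset Equiv

lemma fiber_card_eq (n : ℕ) (j a b : Fin n) :
    ((univ : Finset (Perm (Fin n))).filter fun σ => σ j = a).card
      = ((univ : Finset (Perm (Fin n))).filter fun σ => σ j = b).card := by
  apply Finset.card_bij' (fun σ _ => Equiv.swap a b * σ) (fun σ _ => Equiv.swap a b * σ)
  · intro σ hσ
    simp only [mem_filter, mem_univ, true_and] at hσ ⊢
    simp [hσ]
  · intro σ hσ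
    simp only [mem_filter, mem_univ, true_and] at hσ ⊢
    simp [hσ]
  · intro σ _; simp [← mul_assoc]
  · intro σ _; simp [← mul_assoc]

lemma card_fiber_single (n : ℕ) (j a : Fin n) :
    ((univ : Finset (Perm (Fin n))).filter fun σ => σ j = a).card = (n-1).factorial := by
  have hpos : 0 < n := j.pos
  have hsum : ∑ b : Fin n, ((univ : Finset (Perm (Fin n))).filter fun σ => σ j = b).card
      = (Fintype.card (Perm (Fin n))) := by
    rw [← Finset.card_univ]
    exact (Finset.card_eq_sum_card_fiberwise (fun σ _ => mem_univ (σ j))).symm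
  rw [Finset.sum_congr rfl (fun b _ => fiber_card_eq n j b a)] at hsum
  simp only [Finset.sum_const, Finset.card_univ, Fintype.card_fin, smul_eq_mul,
    Fintype.card_perm] at hsum
  obtain ⟨m, rfl⟩ : ∃ m, n = m + 1 := ⟨n-1, (Nat.succ_pred_eq_of_pos hpos).symm⟩
  simp only [Nat.factorial_succ, Nat.add_sub_cancel] at hsum ⊢
  exact Nat.eq_of_mul_eq_mul_left (by omega) hsum

lemma fiber_pair_card_eq (n : ℕ) (j k a b a' b' : Fin n) (hab : a ≠ b) (hab' : a' ≠ b') :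
    ((univ : Finset (Perm (Fin n))).filter fun σ => σ j = a ∧ σ k = b).card
      = ((univ : Finset (Perm (Fin n))).filter fun σ => σ j = a' ∧ σ k = b').card := by
  set w := Equiv.swap a a' b with hw
  have hwa' : w ≠ a' := by
    rcases eq_or_ne b a' with rfl | hba'
    · rw [hw, Equiv.swap_apply_right]
      intro h; exact hab (h ▸ rfl)
    · rw [hw, Equiv.swap_apply_of_ne_of_ne (Ne.symm hab) hba']
      exact hba'
  set π := Equiv.swap w b' * Equiv.swap a a' with hπ
  have hπa : π a = a' := by
    rw [hπ]
    simp only [Perm.mul_apply, Equiv.swap_apply_left]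
    exact Equiv.swap_apply_of_ne_of_ne (Ne.symm hwa') hab'
  have hπb : π b = b' := by
    rw [hπ]
    simp only [Perm.mul_apply, ← hw, Equiv.swap_apply_left]
  apply Finset.card_bij' (fun σ _ => π * σ) (fun σ _ => π⁻¹ * σ)
  · intro σ hσ
    simp only [mem_filter, mem_univ, true_and, Perm.mul_apply] at hσ ⊢
    rw [hσ.1, hσ.2, hπa, hπb]; exact ⟨rfl, rfl⟩
  · intro σ hσ
    simp only [mem_filter, mem_univ, true_and, Perm.mul_apply] at hσ ⊢
    rw [hσ.1, hσ.2, ← hπa, ← hπb]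
    simp
  · intro σ _; simp [← mul_assoc]
  · intro σ _; simp [← mul_assoc]

lemma card_fiber_pair (n : ℕ) (j k a b : Fin n) (hjk : j ≠ k) (hab : a ≠ b) :
    ((univ : Finset (Perm (Fin n))).filter fun σ => σ j = a ∧ σ k = b).card
      = (n-2).factorial := by
  have hsum : ∑ p ∈ (univ : Finset (Fin n)).offDiag,
      ((univ : Finset (Perm (Fin n))).filter fun σ => (σ j, σ k) = p).card
      = Fintype.card (Perm (Fin n)) := by
    rw [← Finset.card_univ]
    exact (Finset.card_eq_sum_card_fiberwise (fun σ _ =>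
      Finset.mem_offDiag.2 ⟨mem_univ _, mem_univ _, σ.injective.ne hjk⟩)).symm
  have hterm : ∀ p ∈ (univ : Finset (Fin n)).offDiag,
      ((univ : Finset (Perm (Fin n))).filter fun σ => (σ j, σ k) = p).card
      = ((univ : Finset (Perm (Fin n))).filter fun σ => σ j = a ∧ σ k = b).card := by
    intro p hp
    rw [Finset.mem_offDiag] at hp
    have : ((univ : Finset (Perm (Fin n))).filter fun σ => (σ j, σ k) = p)
        = ((univ : Finset (Perm (Fin n))).filter fun σ => σ j = p.1 ∧ σ k = p.2) := by
      apply Finset.filter_congr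
      intro σ _
      simp [Prod.ext_iff]
    rw [this]
    exact fiber_pair_card_eq n j k p.1 p.2 a b hp.2.2 hab
  rw [Finset.sum_congr rfl hterm, Finset.sum_const, Finset.offDiag_card,
    Finset.card_univ, Fintype.card_fin, smul_eq_mul, Fintype.card_perm,
    Fintype.card_fin] at hsum
  have h2 : 2 ≤ n := by
    by_contra h
    push_neg at h
    interval_cases n
    · exact a.elim0
    · exact hab (Subsingleton.elim a b)
  obtain ⟨m, rfl⟩ : ∃ m, n = m + 2 := ⟨n - 2, by omega⟩
  have hfac : (m+2).factorial = (m+2) * (m+1) * m.factorial := by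
    rw [Nat.factorial_succ, Nat.factorial_succ, mul_assoc]
  have hcard : (m+2) * (m+2) - (m+2) = (m+2) * (m+1) := by ring_nf; omega
  rw [hcard, hfac] at hsum
  have hm : m + 2 - 2 = m := by omega
  rw [hm]
  exact Nat.eq_of_mul_eq_mul_left (by positivity) hsum

lemma sum_perm_diag (n : ℕ) (j : Fin n) (F : Fin n → ℂ) :
    ∑ σ : Perm (Fin n), F (σ j) = ((n-1).factorial : ℂ) * ∑ a, F a := by
  have h := Finset.sum_fiberwise_of_maps_to (s := (univ : Finset (Perm (Fin n))))
    (t := (univ : Finset (Fin n))) (g := fun σ => σ j)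
    (fun σ _ => mem_univ (σ j)) (fun σ => F (σ j))
  rw [← h, Finset.mul_sum]
  refine Finset.sum_congr rfl fun a _ => ?_
  rw [Finset.sum_congr rfl (fun σ hσ => by
    rw [(Finset.mem_filter.1 hσ).2]), Finset.sum_const, card_fiber_single,
    nsmul_eq_mul]

lemma sum_perm_pair (n : ℕ) (j k : Fin n) (hjk : j ≠ k) (F : Fin n → Fin n → ℂ) :
    ∑ σ : Perm (Fin n), F (σ j) (σ k)
      = ((n-2).factorial : ℂ) * ∑ p ∈ (univ : Finset (Fin n)).offDiag, F p.1 p.2 := by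
  have h := Finset.sum_fiberwise_of_maps_to (s := (univ : Finset (Perm (Fin n))))
    (t := (univ : Finset (Fin n)).offDiag) (g := fun σ => (σ j, σ k))
    (fun σ _ => Finset.mem_offDiag.2 ⟨mem_univ _, mem_univ _, σ.injective.ne hjk⟩)
    (fun σ => F (σ j) (σ k))
  rw [← h, Finset.mul_sum]
  refine Finset.sum_congr rfl fun p hp => ?_
  have hp' := Finset.mem_offDiag.1 hp
  have heq : ((univ : Finset (Perm (Fin n))).filter fun σ => (σ j, σ k) = p)
      = ((univ : Finset (Perm (Fin n))).filter fun σ => σ j = p.1 ∧ σ k = p.2) := by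
    apply Finset.filter_congr; intro σ _; simp [Prod.ext_iff]
  rw [heq, Finset.sum_congr rfl (fun σ hσ => by
    have h2 := (Finset.mem_filter.1 hσ).2
    rw [h2.1, h2.2]), Finset.sum_const, card_fiber_pair n j k p.1 p.2 hjk hp'.2.2,
    nsmul_eq_mul]

lemma split_sum (n : ℕ) (F : Fin n → Fin n → ℂ) :
    ∑ j, ∑ k, F j k = (∑ j, F j j) + ∑ p ∈ (univ : Finset (Fin n)).offDiag, F p.1 p.2 := by
  rw [← Finset.sum_product']
  rw [← Finset.diag_union_offDiag (univ : Finset (Fin n)),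
    Finset.sum_union (Finset.disjoint_diag_offDiag _)]
  congr 1
  rw [Finset.sum_diag]

lemma trace_left (n : ℕ) (Ψ : Matrix (Fin n) (Fin n) ℂ) (σ : Equiv.Perm (Fin n)) :
    Matrix.trace (Ψᴴ * U σ) = ∑ i, star (Ψ (σ i) i) := by
  simp [Matrix.trace, Matrix.diag, Matrix.mul_apply, U, Matrix.conjTranspose_apply]

lemma trace_right (n : ℕ) (Ψ : Matrix (Fin n) (Fin n) ℂ) (σ : Equiv.Perm (Fin n)) :
    Matrix.trace ((U σ)ᴴ * Ψ) = ∑ i, Ψ (σ i) i := by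
  simp [Matrix.trace, Matrix.diag, Matrix.mul_apply, U, Matrix.conjTranspose_apply]

lemma tr1 (n : ℕ) (Ψ : Matrix (Fin n) (Fin n) ℂ) :
    Matrix.trace (P n * Ψᴴ * P n * Ψ)
      = (1/(n:ℂ)) * (1/(n:ℂ)) * ((∑ x, ∑ y, star (Ψ y x)) * (∑ z, ∑ i, Ψ z i)) := by
  simp only [Matrix.trace, Matrix.diag, Matrix.mul_apply, P, Matrix.of_apply,
    Matrix.conjTranspose_apply, Finset.sum_mul, Finset.mul_sum]
  rw [Finset.sum_comm]
  refine Finset.sum_congr rfl fun a _ => Finset.sum_congr rfl fun b _ => ?_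
  rw [Finset.sum_comm]
  exact Finset.sum_congr rfl fun c _ => Finset.sum_congr rfl fun d _ => by ring

lemma tr2 (n : ℕ) (Ψ : Matrix (Fin n) (Fin n) ℂ) :
    Matrix.trace (Ψᴴ * Ψ) = ∑ j, ∑ a, star (Ψ a j) * Ψ a j := by
  simp [Matrix.trace, Matrix.diag, Matrix.mul_apply, Matrix.conjTranspose_apply]

lemma tr3 (n : ℕ) (Ψ : Matrix (Fin n) (Fin n) ℂ) :
    Matrix.trace (P n * Ψᴴ * Ψ)
      = (1/(n:ℂ)) * ∑ a, (∑ j, star (Ψ a j)) * (∑ k, Ψ a k) := by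
  simp only [Matrix.trace, Matrix.diag, Matrix.mul_apply, P, Matrix.of_apply,
    Matrix.conjTranspose_apply, Finset.sum_mul, Finset.mul_sum]
  rw [Finset.sum_comm]
  exact Finset.sum_congr rfl fun a _ => Finset.sum_congr rfl fun b _ =>
    Finset.sum_congr rfl fun c _ => by ring

lemma tr4 (n : ℕ) (Ψ : Matrix (Fin n) (Fin n) ℂ) :
    Matrix.trace (Ψᴴ * P n * Ψ)
      = (1/(n:ℂ)) * ∑ j, (∑ a, star (Ψ a j)) * (∑ b, Ψ b j) := by
  simp only [Matrix.trace, Matrix.diag, Matrix.mul_apply, P, Matrix.of_apply,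
    Matrix.conjTranspose_apply, Finset.sum_mul, Finset.mul_sum]
  exact Finset.sum_congr rfl fun a _ => Finset.sum_congr rfl fun b _ =>
    Finset.sum_congr rfl fun c _ => by ring

lemma main_sum (n : ℕ) (hn : 2 < n) (Ψ : Matrix (Fin n) (Fin n) ℂ) :
    ∑ σ : Perm (Fin n), (∑ i, star (Ψ (σ i) i)) * (∑ i, Ψ (σ i) i)
      = ((n-1).factorial : ℂ) * (∑ j, ∑ a, star (Ψ a j) * Ψ a j)
        + ((n-2).factorial : ℂ) *
          ((∑ x, ∑ y, star (Ψ y x)) * (∑ z, ∑ i, Ψ i z)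
            - (∑ a, (∑ j, star (Ψ a j)) * (∑ k, Ψ a k))
            - (∑ j, (∑ a, star (Ψ a j)) * (∑ b, Ψ b j))
            + (∑ j, ∑ a, star (Ψ a j) * Ψ a j)) := by
  have h1 : ∀ σ : Perm (Fin n), (∑ i, star (Ψ (σ i) i)) * (∑ i, Ψ (σ i) i)
      = ∑ j, ∑ k, star (Ψ (σ j) j) * Ψ (σ k) k := fun σ => Finset.sum_mul_sum _ _ _ _
  rw [Finset.sum_congr rfl fun σ _ => h1 σ]
  rw [Finset.sum_comm]
  rw [Finset.sum_congr rfl fun j _ => Finset.sum_comm]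
  -- now : ∑ j, ∑ k, ∑ σ, star (Ψ (σ j) j) * Ψ (σ k) k
  rw [split_sum n (fun j k => ∑ σ : Perm (Fin n), star (Ψ (σ j) j) * Ψ (σ k) k)]
  have hdiag : (∑ j, ∑ σ : Perm (Fin n), star (Ψ (σ j) j) * Ψ (σ j) j)
      = ((n-1).factorial : ℂ) * (∑ j, ∑ a, star (Ψ a j) * Ψ a j) := by
    rw [Finset.mul_sum]
    exact Finset.sum_congr rfl fun j _ =>
      sum_perm_diag n j (fun a => star (Ψ a j) * Ψ a j)
  have hoff : (∑ p ∈ (univ : Finset (Fin n)).offDiag,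
        ∑ σ : Perm (Fin n), star (Ψ (σ p.1) p.1) * Ψ (σ p.2) p.2)
      = ((n-2).factorial : ℂ) *
          ((∑ x, ∑ y, star (Ψ y x)) * (∑ z, ∑ i, Ψ i z)
            - (∑ a, (∑ j, star (Ψ a j)) * (∑ k, Ψ a k))
            - (∑ j, (∑ a, star (Ψ a j)) * (∑ b, Ψ b j))
            + (∑ j, ∑ a, star (Ψ a j) * Ψ a j)) := by
    have step1 : ∀ p ∈ (univ : Finset (Fin n)).offDiag,
        (∑ σ : Perm (Fin n), star (Ψ (σ p.1) p.1) * Ψ (σ p.2) p.2)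
          = ((n-2).factorial : ℂ) * ∑ q ∈ (univ : Finset (Fin n)).offDiag,
              star (Ψ q.1 p.1) * Ψ q.2 p.2 := by
      intro p hp
      exact sum_perm_pair n p.1 p.2 (Finset.mem_offDiag.1 hp).2.2
        (fun a b => star (Ψ a p.1) * Ψ b p.2)
    rw [Finset.sum_congr rfl step1, ← Finset.mul_sum]
    congr 1
    -- ∑ p ∈ offDiag, ∑ q ∈ offDiag, star (Ψ q.1 p.1) * Ψ q.2 p.2 = ...
    have inner : ∀ j k : Fin n,
        (∑ q ∈ (univ : Finset (Fin n)).offDiag, star (Ψ q.1 j) * Ψ q.2 k)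
          = (∑ a, star (Ψ a j)) * (∑ b, Ψ b k) - ∑ a, star (Ψ a j) * Ψ a k := by
      intro j k
      have hs := split_sum n (fun a b => star (Ψ a j) * Ψ b k)
      rw [← Finset.sum_mul_sum] at hs
      linear_combination -hs
    rw [Finset.sum_congr rfl (fun p (_ : p ∈ (univ : Finset (Fin n)).offDiag) =>
      inner p.1 p.2)]
    have hsplit := split_sum n (fun j k =>
      (∑ a, star (Ψ a j)) * (∑ b, Ψ b k) - ∑ a, star (Ψ a j) * Ψ a k)
    have E1 : (∑ j, ∑ k, ((∑ a, star (Ψ a j)) * (∑ b, Ψ b k) - ∑ a, star (Ψ a j) * Ψ a k))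
        = (∑ x, ∑ y, star (Ψ y x)) * (∑ z, ∑ i, Ψ i z)
          - (∑ a, (∑ j, star (Ψ a j)) * (∑ k, Ψ a k)) := by
      rw [Finset.sum_congr rfl (fun j (_ : j ∈ (univ : Finset (Fin n))) =>
        Finset.sum_sub_distrib _ _), Finset.sum_sub_distrib]
      congr 1
      · rw [← Finset.sum_mul_sum]
      · rw [Finset.sum_congr rfl (fun j (_ : j ∈ (univ : Finset (Fin n))) =>
          Finset.sum_comm), Finset.sum_comm]
        exact Finset.sum_congr rfl fun a _ => (Finset.sum_mul_sum _ _ _ _).symm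
    have E2 : (∑ j, ((∑ a, star (Ψ a j)) * (∑ b, Ψ b j) - ∑ a, star (Ψ a j) * Ψ a j))
        = (∑ j, (∑ a, star (Ψ a j)) * (∑ b, Ψ b j)) - ∑ j, ∑ a, star (Ψ a j) * Ψ a j :=
      Finset.sum_sub_distrib _ _
    linear_combination -hsplit + E1 - E2
  rw [hdiag, hoff]

end PermSecondMoment

private lemma alg (x F A S SR SC : ℂ) (hx : x ≠ 0) (hx1 : x - 1 ≠ 0) (hF : F ≠ 0) :
    1 / (x * ((x - 1) * F)) * ((x - 1) * F * A + F * (S - SR - SC + A))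
      = 1 / x * (1 / x) * S + 1 / (x - 1) * (A - 1 / x * SC - 1 / x * SR + 1 / x * (1 / x) * S) := by
  have h : x * x * (x - 1) * F ≠ 0 :=
    mul_ne_zero (mul_ne_zero (mul_ne_zero hx hx) hx1) hF
  apply mul_left_cancel₀ h
  have e1 : x * x * (x - 1) * F * (1 / (x * ((x - 1) * F)) * ((x - 1) * F * A + F * (S - SR - SC + A)))
      = (x * ((x - 1) * F) * (1 / (x * ((x - 1) * F)))) * (x * ((x - 1) * F * A + F * (S - SR - SC + A))) := by
    ring
  rw [e1, mul_one_div_cancel (mul_ne_zero hx (mul_ne_zero hx1 hF)), one_mul]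
  have hxe : x * (1/x) = 1 := mul_one_div_cancel hx
  have hx1e : (x-1) * (1/(x-1)) = 1 := mul_one_div_cancel hx1
  have e2 : x * x * (x - 1) * F *
      (1 / x * (1 / x) * S + 1 / (x - 1) * (A - 1 / x * SC - 1 / x * SR + 1 / x * (1 / x) * S))
      = (x * (1/x)) * (x * (1/x)) * ((x-1) * F * S)
        + ((x-1) * (1/(x-1))) * (x * x * F * A - (x * (1/x)) * (x * F * SC)
          - (x * (1/x)) * (x * F * SR) + (x * (1/x)) * (x * (1/x)) * (F * S)) := by
    ring
  rw [e2, hxe, hx1e]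
  ring

/-- For `n > 2` and any complex `n×n` matrix `Ψ`:
`(1/n!) Σ_{σ∈S_n} Tr(Ψ† U(σ)) Tr(U(σ)† Ψ) = Tr(PΨ†PΨ) + (1/(n-1)) Tr((I-P)Ψ†(I-P)Ψ)`. -/
theorem perm_rep_second_moment (n : ℕ) (hn : 2 < n) (Ψ : Matrix (Fin n) (Fin n) ℂ) :
    (1 / (n.factorial : ℂ)) * ∑ σ : Equiv.Perm (Fin n),
        Matrix.trace (Ψᴴ * U σ) * Matrix.trace ((U σ)ᴴ * Ψ) =
      Matrix.trace (P n * Ψᴴ * P n * Ψ) +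
        (1 / ((n : ℂ) - 1)) * Matrix.trace ((1 - P n) * Ψᴴ * (1 - P n) * Ψ) := by
  classical
  rw [Finset.sum_congr rfl (fun σ _ => by
    rw [PermSecondMoment.trace_left n Ψ σ, PermSecondMoment.trace_right n Ψ σ])]
  rw [PermSecondMoment.main_sum n hn Ψ]
  have hexp : (1 - P n) * Ψᴴ * (1 - P n) * Ψ
      = Ψᴴ*Ψ - Ψᴴ*(P n)*Ψ - (P n)*Ψᴴ*Ψ + (P n)*Ψᴴ*(P n)*Ψ := by noncomm_ring
  rw [hexp, Matrix.trace_add, Matrix.trace_sub, Matrix.trace_sub,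
    PermSecondMoment.tr1, PermSecondMoment.tr2, PermSecondMoment.tr3,
    PermSecondMoment.tr4]
  rw [show (∑ z : Fin n, ∑ i : Fin n, Ψ z i) = ∑ z : Fin n, ∑ i : Fin n, Ψ i z from
    Finset.sum_comm]
  obtain ⟨m, rfl⟩ : ∃ m, n = m + 3 := ⟨n - 3, by omega⟩
  have e1 : m + 3 - 1 = m + 2 := rfl
  have e2 : m + 3 - 2 = m + 1 := rfl
  rw [e1, e2]
  have hf3 : ((m+3).factorial : ℂ) = ((m:ℂ)+3) * (((m+2).factorial : ℕ) : ℂ) := by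
    rw [Nat.factorial_succ]; push_cast; ring
  have hf2 : ((m+2).factorial : ℂ) = ((m:ℂ)+2) * (((m+1).factorial : ℕ) : ℂ) := by
    rw [Nat.factorial_succ]; push_cast; ring
  rw [hf3, hf2]
  have h3 : ((m:ℂ)+3) ≠ 0 := by
    have : ((m:ℂ)+3) = ((m+3 : ℕ) : ℂ) := by push_cast; ring
    rw [this]
    exact Nat.cast_ne_zero.mpr (by omega)
  have h2 : ((m:ℂ)+2) ≠ 0 := by
    have : ((m:ℂ)+2) = ((m+2 : ℕ) : ℂ) := by push_cast; ring
    rw [this]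
    exact Nat.cast_ne_zero.mpr (by omega)
  have hm1 : (((m+3 : ℕ) : ℂ) - 1) ≠ 0 := by
    have : (((m+3 : ℕ) : ℂ) - 1) = ((m:ℂ)+2) := by push_cast; ring
    rw [this]; exact h2
  have hfne : (((m+1).factorial : ℕ) : ℂ) ≠ 0 :=
    Nat.cast_ne_zero.2 (Nat.factorial_ne_zero _)
  have hnc : ((m+3 : ℕ) : ℂ) = (m:ℂ)+3 := by push_cast; ring
  rw [hnc]
  set A := ∑ j : Fin (m+3), ∑ a : Fin (m+3), star (Ψ a j) * Ψ a j with hA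
  set Sx := ∑ x : Fin (m+3), ∑ y : Fin (m+3), star (Ψ y x) with hSx
  set Sz := ∑ z : Fin (m+3), ∑ i : Fin (m+3), Ψ i z with hSz
  set SR := ∑ a : Fin (m+3), (∑ j : Fin (m+3), star (Ψ a j)) * (∑ k : Fin (m+3), Ψ a k)
    with hSR
  set SC := ∑ j : Fin (m+3), (∑ a : Fin (m+3), star (Ψ a j)) * (∑ b : Fin (m+3), Ψ b j)
    with hSC
  set F := (((m+1).factorial : ℕ) : ℂ) with hF
  clear_value A Sx Sz SR SC F
  have h21 : ((m:ℂ)+2) = ((m:ℂ)+3) - 1 := by ring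
  rw [h21]
  exact alg ((m:ℂ)+3) F A (Sx*Sz) SR SC h3 (h21 ▸ h2) hfne
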